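/- Let g : ℕ⁺ → ℂ with Σ_{n≥1} 2^{ω(n)} |(μ* × g)(n)| / n < ∞, where μ* × g is the unitary convolution with μ*. Then for every n ≥ 1, g(n) = Σ_{q=1}^∞ ã_q c̃_q(n), with the series absolutely convergent, where ã_q = (1/q) Σ_{m ≥ 1, gcd(m,q)=1} (μ* × g)(mq)/m. -/

import Mathlib

def uDivisors (n : ℕ) : Finset ℕ := n.divisors.filter (fun d => Nat.gcd d (n / d) = 1)

def gcud (n q : ℕ) : ℕ := (uDivisors n ∩ uDivisors q).sup id

def mustar (n : ℕ) : ℤ := (-1) ^ n.primeFactors.card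

def ctilde (q n : ℕ) : ℤ := ∑ d ∈ uDivisors (gcud n q), (d : ℤ) * mustar (q / d)

/-- The unitary convolution of two arithmetic functions valued in ℂ. -/
noncomputable def uconv (f g : ℕ → ℂ) (n : ℕ) : ℂ := ∑ d ∈ uDivisors n, f d * g (n / d)


/-!
Write `f = μ* × g`. Unitary Möbius inversion gives `g n = ∑_{k ∥ n} f k`, and the orthogonality
relation `∑_{q ∥ k} c̃_q(n) = k · [k ∥ n]` turns this into the double series
`∑_k ∑_{q ∥ k} f(k)/k · c̃_q(n)`. It converges absolutely because `|c̃_q(n)| ≤ ∑_{d ∥ n} d` and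
`k` has `2^ω(k)` unitary divisors. Regrouping it by `q`, with `k = m q` and `gcd(m, q) = 1`,
produces `∑_q ã_q c̃_q(n)`.
-/

open Finset

section UnitaryDivisors

lemma mem_uDivisors {d n : ℕ} : d ∈ uDivisors n ↔ d ∣ n ∧ Nat.Coprime d (n / d) ∧ n ≠ 0 := by
  simp only [uDivisors, mem_filter, Nat.mem_divisors, Nat.Coprime]
  tauto

lemma uDivisors_zero : uDivisors 0 = ∅ := by simp [uDivisors]

lemma ne_zero_of_mem_uDivisors {d n : ℕ} (h : d ∈ uDivisors n) : d ≠ 0 := by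
  rintro rfl
  obtain ⟨hdvd, -, hn⟩ := mem_uDivisors.mp h
  exact hn (Nat.eq_zero_of_zero_dvd hdvd)

lemma one_mem_uDivisors {n : ℕ} (hn : n ≠ 0) : 1 ∈ uDivisors n := by
  simp [mem_uDivisors, hn]

lemma self_mem_uDivisors {n : ℕ} (hn : n ≠ 0) : n ∈ uDivisors n := by
  simp [mem_uDivisors, hn, Nat.div_self (Nat.pos_of_ne_zero hn)]

lemma div_mem_uDivisors {d n : ℕ} (h : d ∈ uDivisors n) : n / d ∈ uDivisors n := by
  obtain ⟨hdvd, hcop, hn⟩ := mem_uDivisors.mp h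
  refine mem_uDivisors.mpr ⟨Nat.div_dvd_of_dvd hdvd, ?_, hn⟩
  rw [Nat.div_div_self hdvd hn]
  exact hcop.symm

lemma div_div_of_mem_uDivisors {d n : ℕ} (h : d ∈ uDivisors n) : n / (n / d) = d :=
  Nat.div_div_self (mem_uDivisors.mp h).1 (mem_uDivisors.mp h).2.2

lemma div_eq_one_iff_of_mem_uDivisors {d n : ℕ} (h : d ∈ uDivisors n) : n / d = 1 ↔ d = n := by
  obtain ⟨hdvd, -, hn⟩ := mem_uDivisors.mp h
  constructor
  · intro h1
    rw [← Nat.mul_div_cancel' hdvd, h1, mul_one]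
  · rintro rfl
    exact Nat.div_self (Nat.pos_of_ne_zero hn)

lemma Nat.div_eq_div_mul_div {e d n : ℕ} (he : e ∣ d) (hd : d ∣ n) :
    n / e = d / e * (n / d) := by
  rcases eq_or_ne d 0 with rfl | hd0
  · simp [Nat.eq_zero_of_zero_dvd hd]
  rw [Nat.div_mul_div_comm he hd, mul_comm e d, Nat.mul_div_mul_left _ _ (Nat.pos_of_ne_zero hd0)]

lemma mem_uDivisors_trans {e d n : ℕ} (he : e ∈ uDivisors d) (hd : d ∈ uDivisors n) :
    e ∈ uDivisors n := by
  obtain ⟨he1, he2, -⟩ := mem_uDivisors.mp he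
  obtain ⟨hd1, hd2, hd3⟩ := mem_uDivisors.mp hd
  refine mem_uDivisors.mpr ⟨he1.trans hd1, ?_, hd3⟩
  rw [Nat.div_eq_div_mul_div he1 hd1]
  exact Nat.Coprime.mul_right he2 (Nat.Coprime.coprime_dvd_left he1 hd2)

lemma div_mem_uDivisors_div {c d n : ℕ} (hc : c ∈ uDivisors d) (hd : d ∈ uDivisors n) :
    d / c ∈ uDivisors (n / c) := by
  obtain ⟨hc1, -, -⟩ := mem_uDivisors.mp hc
  obtain ⟨hd1, hd2, -⟩ := mem_uDivisors.mp hd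
  have key : n / c = d / c * (n / d) := Nat.div_eq_div_mul_div hc1 hd1
  have hdc0 : d / c ≠ 0 := ne_zero_of_mem_uDivisors (div_mem_uDivisors hc)
  refine mem_uDivisors.mpr ⟨⟨n / d, key⟩, ?_, ?_⟩
  · rw [key, Nat.mul_div_cancel_left _ (Nat.pos_of_ne_zero hdc0)]
    exact Nat.Coprime.coprime_dvd_left (Nat.div_dvd_of_dvd hc1) hd2
  · rw [key]
    exact mul_ne_zero hdc0 (ne_zero_of_mem_uDivisors (div_mem_uDivisors hd))

lemma mul_mem_uDivisors {e c n : ℕ} (he : e ∈ uDivisors n) (hc : c ∈ uDivisors (n / e)) :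
    e * c ∈ uDivisors n := by
  obtain ⟨he1, he2, he3⟩ := mem_uDivisors.mp he
  obtain ⟨hc1, hc2, -⟩ := mem_uDivisors.mp hc
  refine mem_uDivisors.mpr ⟨?_, ?_, he3⟩
  · rw [← Nat.mul_div_cancel' he1]
    exact Nat.mul_dvd_mul_left e hc1
  · rw [← Nat.div_div_eq_div_mul]
    exact Nat.Coprime.mul_left (Nat.Coprime.coprime_dvd_right (Nat.div_dvd_of_dvd hc1) he2) hc2

lemma mem_uDivisors_mul {e c : ℕ} (he : e ≠ 0) (hc : c ≠ 0) (h : Nat.Coprime e c) :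
    e ∈ uDivisors (e * c) :=
  mem_uDivisors.mpr ⟨⟨c, rfl⟩, by rw [Nat.mul_div_cancel_left _ (Nat.pos_of_ne_zero he)]; exact h,
    mul_ne_zero he hc⟩

lemma mem_uDivisors_of_dvd {d e n : ℕ} (hd : d ∈ uDivisors n) (he : e ∈ uDivisors n)
    (hde : d ∣ e) : d ∈ uDivisors e := by
  obtain ⟨he1, -, -⟩ := mem_uDivisors.mp he
  refine mem_uDivisors.mpr ⟨hde, ?_, ne_zero_of_mem_uDivisors he⟩
  have : e / d ∣ n / d := ⟨n / e, Nat.div_eq_div_mul_div hde he1⟩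
  exact Nat.Coprime.coprime_dvd_right this (mem_uDivisors.mp hd).2.1

lemma lcm_mem_uDivisors {d e n : ℕ} (hd : d ∈ uDivisors n) (he : e ∈ uDivisors n) :
    Nat.lcm d e ∈ uDivisors n := by
  obtain ⟨hd1, hd2, hn0⟩ := mem_uDivisors.mp hd
  obtain ⟨he1, he2, -⟩ := mem_uDivisors.mp he
  have hl : Nat.lcm d e ∣ n := Nat.lcm_dvd hd1 he1
  have hdl : n / Nat.lcm d e ∣ n / d :=
    ⟨Nat.lcm d e / d, by rw [Nat.div_eq_div_mul_div (Nat.dvd_lcm_left d e) hl, mul_comm]⟩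
  have hel : n / Nat.lcm d e ∣ n / e :=
    ⟨Nat.lcm d e / e, by rw [Nat.div_eq_div_mul_div (Nat.dvd_lcm_right d e) hl, mul_comm]⟩
  refine mem_uDivisors.mpr ⟨hl, ?_, hn0⟩
  exact Nat.Coprime.coprime_dvd_left (Nat.lcm_dvd_mul d e)
    (Nat.Coprime.mul_left (hd2.coprime_dvd_right hdl) (he2.coprime_dvd_right hel))

end UnitaryDivisors

section GreatestCommonUnitaryDivisor

lemma gcud_mem {n q : ℕ} (hn : n ≠ 0) (hq : q ≠ 0) :
    gcud n q ∈ uDivisors n ∩ uDivisors q := by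
  have hne : (uDivisors n ∩ uDivisors q).Nonempty :=
    ⟨1, mem_inter.mpr ⟨one_mem_uDivisors hn, one_mem_uDivisors hq⟩⟩
  obtain ⟨b, hb, hbe⟩ := exists_mem_eq_sup _ hne id
  rw [gcud, hbe]
  exact hb

-- The common unitary divisors are closed under `lcm`, so their maximum is a multiple of each.
lemma uDivisors_gcud {n q : ℕ} (hn : n ≠ 0) (hq : q ≠ 0) :
    uDivisors (gcud n q) = uDivisors n ∩ uDivisors q := by
  obtain ⟨hgn, hgq⟩ := mem_inter.mp (gcud_mem hn hq)
  ext e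
  rw [mem_inter]
  refine ⟨fun he => ⟨mem_uDivisors_trans he hgn, mem_uDivisors_trans he hgq⟩, ?_⟩
  rintro ⟨hen, heq⟩
  have hlcm : Nat.lcm e (gcud n q) ∈ uDivisors n ∩ uDivisors q :=
    mem_inter.mpr ⟨lcm_mem_uDivisors hen hgn, lcm_mem_uDivisors heq hgq⟩
  have hlcm_eq : Nat.lcm e (gcud n q) = gcud n q :=
    le_antisymm (le_sup (f := id) hlcm) (Nat.le_of_dvd
      (Nat.pos_of_ne_zero (ne_zero_of_mem_uDivisors (mem_inter.mp hlcm).1)) (Nat.dvd_lcm_right _ _))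
  exact mem_uDivisors_of_dvd hen hgn (hlcm_eq ▸ Nat.dvd_lcm_left _ _)

end GreatestCommonUnitaryDivisor

section UnitaryDivisorsAsPrimeSets

/-- The unitary divisor of `m` whose prime factors are those of `m` lying in `S`. -/
noncomputable def unitaryPart (m : ℕ) (S : Finset ℕ) : ℕ := ∏ p ∈ S, ordProj[p] m

variable {m : ℕ} {S : Finset ℕ}

lemma unitaryPart_ne_zero (hS : S ⊆ m.primeFactors) : unitaryPart m S ≠ 0 :=
  prod_ne_zero_iff.mpr fun _ hp => pow_ne_zero _ (Nat.pos_of_mem_primeFactors (hS hp)).ne'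

lemma unitaryPart_primeFactors (hm : m ≠ 0) : unitaryPart m m.primeFactors = m :=
  Nat.prod_factorization_pow_eq_self hm

lemma unitaryPart_mul_unitaryPart_sdiff (hm : m ≠ 0) (hS : S ⊆ m.primeFactors) :
    unitaryPart m S * unitaryPart m (m.primeFactors \ S) = m := by
  rw [unitaryPart, unitaryPart, ← prod_union disjoint_sdiff, union_sdiff_of_subset hS]
  exact unitaryPart_primeFactors hm

lemma coprime_unitaryPart {T : Finset ℕ} (hS : S ⊆ m.primeFactors) (hT : T ⊆ m.primeFactors)
    (hST : Disjoint S T) : Nat.Coprime (unitaryPart m S) (unitaryPart m T) := by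
  refine Nat.Coprime.prod_left fun p hp => Nat.Coprime.prod_right fun q hq => ?_
  have hpq : p ≠ q := fun h => disjoint_left.mp hST hp (h ▸ hq)
  exact Nat.Coprime.pow _ _ ((Nat.coprime_primes
    (Nat.prime_of_mem_primeFactors (hS hp)) (Nat.prime_of_mem_primeFactors (hT hq))).mpr hpq)

lemma unitaryPart_mem_uDivisors (hm : m ≠ 0) (hS : S ⊆ m.primeFactors) :
    unitaryPart m S ∈ uDivisors m := by
  have hmul := unitaryPart_mul_unitaryPart_sdiff hm hS
  have hdiv : m / unitaryPart m S = unitaryPart m (m.primeFactors \ S) :=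
    Nat.div_eq_of_eq_mul_right (Nat.pos_of_ne_zero (unitaryPart_ne_zero hS)) hmul.symm
  refine mem_uDivisors.mpr ⟨⟨_, hmul.symm⟩, ?_, hm⟩
  rw [hdiv]
  exact coprime_unitaryPart hS sdiff_subset disjoint_sdiff

lemma primeFactors_unitaryPart (hm : m ≠ 0) (hS : S ⊆ m.primeFactors) :
    (unitaryPart m S).primeFactors = S := by
  ext q
  rw [Nat.mem_primeFactors]
  constructor
  · rintro ⟨hq, hdvd, -⟩
    obtain ⟨p, hp, hqp⟩ := hq.prime.exists_mem_finset_dvd hdvd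
    have hqp : q = p := (Nat.prime_dvd_prime_iff_eq hq (Nat.prime_of_mem_primeFactors (hS hp))).mp
      (hq.prime.dvd_of_dvd_pow hqp)
    exact hqp ▸ hp
  · intro hq
    have hqprime := Nat.prime_of_mem_primeFactors (hS hq)
    have hfpos : 0 < m.factorization q :=
      hqprime.factorization_pos_of_dvd hm (Nat.dvd_of_mem_primeFactors (hS hq))
    exact ⟨hqprime, (dvd_pow_self q hfpos.ne').trans (dvd_prod_of_mem _ hq),
      unitaryPart_ne_zero hS⟩

-- A prime dividing a unitary divisor `d` of `m` does not divide `m / d`.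
lemma factorization_eq_of_mem_uDivisors {d p : ℕ} (hd : d ∈ uDivisors m)
    (hp : p ∈ d.primeFactors) : d.factorization p = m.factorization p := by
  obtain ⟨hdvd, hcop, hm⟩ := mem_uDivisors.mp hd
  have hnd : ¬ p ∣ m / d := fun hpmd =>
    (Nat.prime_of_mem_primeFactors hp).not_dvd_one
      (hcop ▸ Nat.dvd_gcd (Nat.dvd_of_mem_primeFactors hp) hpmd)
  have h0 : (m / d).factorization p = 0 := Nat.factorization_eq_zero_of_not_dvd hnd
  rw [← Nat.mul_div_cancel' hdvd, Nat.factorization_mul (ne_zero_of_mem_uDivisors hd)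
    (ne_zero_of_mem_uDivisors (div_mem_uDivisors hd)), Finsupp.add_apply, h0, add_zero]

lemma unitaryPart_primeFactors_of_mem_uDivisors {d : ℕ} (hd : d ∈ uDivisors m) :
    unitaryPart m d.primeFactors = d := by
  calc unitaryPart m d.primeFactors = ∏ p ∈ d.primeFactors, ordProj[p] d :=
        prod_congr rfl fun p hp => by rw [factorization_eq_of_mem_uDivisors hd hp]
    _ = d := unitaryPart_primeFactors (ne_zero_of_mem_uDivisors hd)

lemma primeFactors_subset_of_mem_uDivisors {d : ℕ} (hd : d ∈ uDivisors m) :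
    d.primeFactors ⊆ m.primeFactors :=
  Nat.primeFactors_mono (mem_uDivisors.mp hd).1 (mem_uDivisors.mp hd).2.2

lemma sum_uDivisors_eq_sum_powerset {M : Type*} [AddCommMonoid M] (hm : m ≠ 0) (f : ℕ → M) :
    ∑ d ∈ uDivisors m, f d = ∑ S ∈ m.primeFactors.powerset, f (unitaryPart m S) := by
  refine sum_nbij' (fun d => d.primeFactors) (unitaryPart m) (fun d hd => ?_) (fun S hS => ?_)
    (fun d hd => ?_) (fun S hS => ?_) (fun d hd => ?_)
  · exact mem_powerset.mpr (primeFactors_subset_of_mem_uDivisors hd)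
  · exact unitaryPart_mem_uDivisors hm (mem_powerset.mp hS)
  · exact unitaryPart_primeFactors_of_mem_uDivisors hd
  · exact primeFactors_unitaryPart hm (mem_powerset.mp hS)
  · rw [unitaryPart_primeFactors_of_mem_uDivisors hd]

lemma card_uDivisors (hm : m ≠ 0) : #(uDivisors m) = 2 ^ #m.primeFactors := by
  rw [card_eq_sum_ones, sum_uDivisors_eq_sum_powerset hm, ← card_eq_sum_ones, card_powerset]

lemma sum_mustar_uDivisors (hm : m ≠ 0) :
    ∑ e ∈ uDivisors m, mustar e = if m = 1 then 1 else 0 := by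
  rw [sum_uDivisors_eq_sum_powerset hm]
  have hS : ∀ S ∈ m.primeFactors.powerset, mustar (unitaryPart m S) = (-1 : ℤ) ^ #S :=
    fun S hS => by rw [mustar, primeFactors_unitaryPart hm (mem_powerset.mp hS)]
  rw [sum_congr rfl hS, sum_powerset_neg_one_pow_card]
  simp [Nat.primeFactors_eq_empty, hm]

end UnitaryDivisorsAsPrimeSets

section UnitaryConvolution

lemma sum_uDivisors_swap {M : Type*} [AddCommMonoid M] (q : ℕ) (F : ℕ → ℕ → M) :
    ∑ d ∈ uDivisors q, F d (q / d) = ∑ d ∈ uDivisors q, F (q / d) d := by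
  refine sum_nbij' (q / ·) (q / ·) (fun d hd => div_mem_uDivisors hd)
    (fun d hd => div_mem_uDivisors hd) (fun d hd => div_div_of_mem_uDivisors hd)
    (fun d hd => div_div_of_mem_uDivisors hd) (fun d hd => ?_)
  rw [div_div_of_mem_uDivisors hd]

lemma sum_uDivisors_sum_uDivisors {M : Type*} [AddCommMonoid M] (k : ℕ) (F : ℕ → ℕ → M) :
    ∑ q ∈ uDivisors k, ∑ d ∈ uDivisors q, F d (q / d) =
      ∑ d ∈ uDivisors k, ∑ e ∈ uDivisors (k / d), F d e := by
  rw [sum_sigma', sum_sigma']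
  refine sum_nbij' (fun p => ⟨p.2, p.1 / p.2⟩) (fun p => ⟨p.1 * p.2, p.1⟩) ?_ ?_ ?_ ?_
    (fun _ _ => rfl)
  · rintro ⟨q, d⟩ hp
    rw [mem_sigma] at hp
    exact mem_sigma.mpr ⟨mem_uDivisors_trans hp.2 hp.1, div_mem_uDivisors_div hp.2 hp.1⟩
  · rintro ⟨d, e⟩ hp
    rw [mem_sigma] at hp
    have hcop : Nat.Coprime d e :=
      (mem_uDivisors.mp hp.1).2.1.coprime_dvd_right (mem_uDivisors.mp hp.2).1
    exact mem_sigma.mpr ⟨mul_mem_uDivisors hp.1 hp.2, mem_uDivisors_mul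
      (ne_zero_of_mem_uDivisors hp.1) (ne_zero_of_mem_uDivisors hp.2) hcop⟩
  · rintro ⟨q, d⟩ hp
    rw [mem_sigma] at hp
    simp [Nat.mul_div_cancel' (mem_uDivisors.mp hp.2).1]
  · rintro ⟨d, e⟩ hp
    rw [mem_sigma] at hp
    simp [Nat.mul_div_cancel_left _ (Nat.pos_of_ne_zero (ne_zero_of_mem_uDivisors hp.1))]

lemma uconv_comm (f g : ℕ → ℂ) : uconv f g = uconv g f := by
  ext q
  rw [uconv, uconv, sum_uDivisors_swap q fun d c => f d * g c]
  exact sum_congr rfl fun _ _ => mul_comm _ _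

-- `(F × μ*) × 1 = F`: unitary Möbius inversion.
lemma sum_uDivisors_sum_uDivisors_mul_mustar {R : Type*} [CommRing R] (F : ℕ → R) {k : ℕ}
    (hk : k ≠ 0) : ∑ q ∈ uDivisors k, ∑ d ∈ uDivisors q, F d * (mustar (q / d) : R) = F k := by
  rw [sum_uDivisors_sum_uDivisors k fun d c => F d * (mustar c : R)]
  have hinner : ∀ d ∈ uDivisors k,
      ∑ e ∈ uDivisors (k / d), F d * (mustar e : R) = if d = k then F k else 0 := by
    intro d hd
    rw [← mul_sum, ← Int.cast_sum, sum_mustar_uDivisors (ne_zero_of_mem_uDivisors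
      (div_mem_uDivisors hd))]
    simp only [div_eq_one_iff_of_mem_uDivisors hd]
    split_ifs with h <;> simp [h]
  rw [sum_congr rfl hinner, sum_ite_eq' (uDivisors k) k, if_pos (self_mem_uDivisors hk)]

lemma sum_uDivisors_uconv_mustar (g : ℕ → ℂ) {n : ℕ} (hn : n ≠ 0) :
    ∑ d ∈ uDivisors n, uconv (fun m => (mustar m : ℂ)) g d = g n := by
  simp only [uconv_comm _ g]
  exact sum_uDivisors_sum_uDivisors_mul_mustar g hn

end UnitaryConvolution

section UnitaryRamanujanSum

lemma ctilde_eq_sum_uDivisors {q n : ℕ} (hn : n ≠ 0) (hq : q ≠ 0) :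
    ctilde q n =
      ∑ d ∈ uDivisors q, (if d ∈ uDivisors n then (d : ℤ) else 0) * mustar (q / d) := by
  rw [ctilde, uDivisors_gcud hn hq, inter_comm, ← filter_mem_eq_inter, sum_filter]
  exact sum_congr rfl fun d _ => by split_ifs <;> simp

lemma sum_uDivisors_ctilde {n : ℕ} (hn : n ≠ 0) (k : ℕ) :
    ∑ q ∈ uDivisors k, ctilde q n = if k ∈ uDivisors n then (k : ℤ) else 0 := by
  rcases eq_or_ne k 0 with rfl | hk
  · simp [uDivisors_zero]
  rw [sum_congr rfl fun q hq => ctilde_eq_sum_uDivisors hn (ne_zero_of_mem_uDivisors hq)]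
  exact sum_uDivisors_sum_uDivisors_mul_mustar (fun d => if d ∈ uDivisors n then (d : ℤ) else 0) hk

lemma norm_ctilde_le {n q : ℕ} (hn : n ≠ 0) (hq : q ≠ 0) :
    ‖(ctilde q n : ℂ)‖ ≤ ∑ d ∈ uDivisors n, (d : ℝ) := by
  rw [Complex.norm_intCast, ctilde]
  calc |((∑ d ∈ uDivisors (gcud n q), (d : ℤ) * mustar (q / d) : ℤ) : ℝ)|
      ≤ ∑ d ∈ uDivisors (gcud n q), |((d : ℤ) * mustar (q / d) : ℝ)| := by
        push_cast
        exact abs_sum_le_sum_abs _ _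
    _ = ∑ d ∈ uDivisors (gcud n q), (d : ℝ) := by
        refine sum_congr rfl fun d _ => ?_
        simp [mustar, abs_mul]
    _ ≤ ∑ d ∈ uDivisors n, (d : ℝ) := by
        refine sum_le_sum_of_subset_of_nonneg ?_ fun _ _ _ => Nat.cast_nonneg _
        rw [uDivisors_gcud hn hq]
        exact inter_subset_left

end UnitaryRamanujanSum

section Expansion

def coprimeMulEquiv : (Σ q : ℕ, {m : ℕ // 0 < m ∧ Nat.Coprime m (q + 1)}) ≃
    (Σ k : ℕ, {d : ℕ // d ∈ uDivisors k}) where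
  toFun p := ⟨p.2.1 * (p.1 + 1), p.1 + 1, by
    refine mem_uDivisors.mpr ⟨Dvd.intro_left _ rfl, ?_, mul_ne_zero p.2.2.1.ne' p.1.succ_ne_zero⟩
    rw [Nat.mul_div_cancel _ p.1.succ_pos]
    exact p.2.2.2.symm⟩
  invFun p := ⟨p.2.1 - 1, p.1 / p.2.1, by
    obtain ⟨hdvd, hcop, hk⟩ := mem_uDivisors.mp p.2.2
    have hd0 : 0 < p.2.1 := Nat.pos_of_ne_zero (ne_zero_of_mem_uDivisors p.2.2)
    refine ⟨Nat.div_pos (Nat.le_of_dvd (Nat.pos_of_ne_zero hk) hdvd) hd0, ?_⟩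
    rw [Nat.sub_add_cancel hd0]
    exact hcop.symm⟩
  left_inv := by
    rintro ⟨q, m, _⟩
    apply Sigma.subtype_ext <;> simp [Nat.mul_div_cancel _ q.succ_pos]
  right_inv := by
    rintro ⟨k, d, hd⟩
    have hd0 : 0 < d := Nat.pos_of_ne_zero (ne_zero_of_mem_uDivisors hd)
    apply Sigma.subtype_ext
    · change k / d * (d - 1 + 1) = k
      rw [Nat.sub_add_cancel hd0, Nat.div_mul_cancel (mem_uDivisors.mp hd).1]
    · exact Nat.sub_add_cancel hd0

lemma summable_norm_tsum_sigma {β : Type*} {γ : β → Type*} {E : Type*} [NormedAddCommGroup E]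
    {F : (Σ b, γ b) → E} (hF : Summable fun p => ‖F p‖) :
    Summable fun b => ‖∑' c, F ⟨b, c⟩‖ :=
  hF.sigma.of_nonneg_of_le (fun _ => norm_nonneg _)
    fun b => norm_tsum_le_tsum_norm (hF.sigma_factor b)

lemma summable_norm_uDivisors_sigma {f c : ℕ → ℂ} {C : ℝ}
    (hf : Summable fun k : ℕ => (2 : ℝ) ^ #(k + 1).primeFactors * ‖f (k + 1)‖ / (k + 1))
    (hc : ∀ d, d ≠ 0 → ‖c d‖ ≤ C) :
    Summable fun p : Σ k : ℕ, {d : ℕ // d ∈ uDivisors k} => ‖f p.1 / p.1 * c p.2‖ := by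
  refine (summable_sigma_of_nonneg fun _ => norm_nonneg _).mpr ⟨fun _ => .of_finite, ?_⟩
  rw [← summable_nat_add_iff 1]
  refine (hf.mul_right C).of_nonneg_of_le (fun _ => tsum_nonneg fun _ => norm_nonneg _)
    fun k => ?_
  rw [Finset.tsum_subtype (uDivisors (k + 1)) fun d => ‖f (k + 1) / (k + 1 : ℕ) * c d‖]
  calc ∑ d ∈ uDivisors (k + 1), ‖f (k + 1) / (k + 1 : ℕ) * c d‖
      ≤ ∑ _d ∈ uDivisors (k + 1), ‖f (k + 1)‖ / (k + 1) * C := by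
        refine sum_le_sum fun d hd => ?_
        rw [norm_mul, norm_div, Complex.norm_natCast]
        push_cast
        exact mul_le_mul_of_nonneg_left (hc d (ne_zero_of_mem_uDivisors hd)) (by positivity)
    _ = (2 : ℝ) ^ #(k + 1).primeFactors * ‖f (k + 1)‖ / (k + 1) * C := by
        rw [sum_const, card_uDivisors k.succ_ne_zero, nsmul_eq_mul]
        push_cast
        ring

lemma tsum_uDivisors_sigma_ctilde {f : ℕ → ℂ} {n : ℕ} (hn : n ≠ 0)
    (hsum : Summable fun p : Σ k : ℕ, {d : ℕ // d ∈ uDivisors k} =>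
      f p.1 / p.1 * (ctilde p.2 n : ℂ)) :
    ∑' p : Σ k : ℕ, {d : ℕ // d ∈ uDivisors k}, f p.1 / p.1 * (ctilde p.2 n : ℂ) =
      ∑ k ∈ uDivisors n, f k := by
  have hfiber : ∀ k, ∑' d : {d : ℕ // d ∈ uDivisors k}, f k / k * (ctilde d n : ℂ) =
      if k ∈ uDivisors n then f k else 0 := by
    intro k
    rw [Finset.tsum_subtype (uDivisors k) fun d => f k / k * (ctilde d n : ℂ), ← mul_sum,
      ← Int.cast_sum, sum_uDivisors_ctilde hn]
    split_ifs with hk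
    · have hk0 : (k : ℂ) ≠ 0 := Nat.cast_ne_zero.mpr (ne_zero_of_mem_uDivisors hk)
      push_cast
      field_simp
    · simp
  rw [hsum.tsum_sigma, tsum_congr hfiber, tsum_eq_sum fun k hk => if_neg hk]
  exact sum_congr rfl fun k hk => if_pos hk

end Expansion

theorem expansion_one_variable (g : ℕ → ℂ)
    (h : Summable (fun n : ℕ =>
      (2 : ℝ) ^ (n + 1).primeFactors.card *
        ‖uconv (fun m => (mustar m : ℂ)) g (n + 1)‖ / (n + 1)))
    (a : ℕ → ℂ)
    (ha : ∀ q : ℕ, 0 < q → a q = (1 / (q : ℂ)) *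
      ∑' m : {m : ℕ // 0 < m ∧ Nat.Coprime m q},
        uconv (fun m => (mustar m : ℂ)) g ((m : ℕ) * q) / ((m : ℕ) : ℂ)) :
    ∀ n : ℕ, 0 < n →
      Summable (fun q : ℕ => ‖a (q + 1) * (ctilde (q + 1) n : ℂ)‖) ∧
        g n = ∑' q : ℕ, a (q + 1) * (ctilde (q + 1) n : ℂ) := by
  intro n hn
  set f := uconv (fun m => (mustar m : ℂ)) g
  set Φ : (Σ k : ℕ, {d : ℕ // d ∈ uDivisors k}) → ℂ := fun p => f p.1 / p.1 * (ctilde p.2 n : ℂ)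
  have hΦ : Summable fun p => ‖Φ p‖ :=
    summable_norm_uDivisors_sigma (c := fun d => (ctilde d n : ℂ)) h fun _ hd => norm_ctilde_le hn.ne' hd
  have hΦe : Summable fun p => ‖Φ (coprimeMulEquiv p)‖ := coprimeMulEquiv.summable_iff.mpr hΦ
  have hfiber : ∀ q : ℕ, ∑' m, Φ (coprimeMulEquiv ⟨q, m⟩) = a (q + 1) * (ctilde (q + 1) n : ℂ) := by
    intro q
    rw [ha (q + 1) q.succ_pos, mul_assoc, ← tsum_mul_right, ← tsum_mul_left]
    refine tsum_congr fun m => ?_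
    change f (m * (q + 1)) / (m * (q + 1) : ℕ) * (ctilde (q + 1) n : ℂ) = _
    rw [Nat.cast_mul, ← div_div]
    push_cast
    ring
  refine ⟨(summable_norm_tsum_sigma hΦe).congr fun q => by rw [hfiber], ?_⟩
  calc g n = ∑ k ∈ uDivisors n, f k := (sum_uDivisors_uconv_mustar g hn.ne').symm
    _ = ∑' p, Φ p := (tsum_uDivisors_sigma_ctilde hn.ne' hΦ.of_norm).symm
    _ = ∑' p, Φ (coprimeMulEquiv p) := (coprimeMulEquiv.tsum_eq Φ).symm
    _ = ∑' q, ∑' m, Φ (coprimeMulEquiv ⟨q, m⟩) := hΦe.of_norm.tsum_sigma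
    _ = ∑' q, a (q + 1) * (ctilde (q + 1) n : ℂ) := tsum_congr hfiber
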